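/- If the Hurwitz orbit of (s_1,…,s_n) ∈ G^n is finite, then for every subsequence (i_1,…,i_k) of (1,…,n) there exists a positive power of the product s_{i_1} s_{i_2} ⋯ s_{i_k} that commutes with each of s_{i_1},…,s_{i_k}. -/

import Mathlib

/-!
Hurwitz moves preserve the product `c` of a tuple. Applying `σ_1 ⋯ σ_{n-1}` carries the first
entry to the end, conjugated by the product of the others, i.e. by `c`; doing this `n` times
conjugates the whole tuple by `c`, so all conjugates of the tuple by powers of `c` lie in its
orbit, and a finite orbit forces two of them to coincide. Passing to a subsequence is harmless:
moving an entry to the end and forgetting it embeds the orbit of the shorter tuple into the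
orbit of the longer one.
-/

/-- The Hurwitz generator `σ_i` acting on tuples in `G^n` (0-indexed). -/
def hurwitzSigma {G : Type*} [Group G] {n : ℕ} (i : ℕ) (hi : i + 1 < n)
    (s : Fin n → G) : Fin n → G := fun j =>
  if j.val = i then s ⟨i + 1, hi⟩
  else if j.val = i + 1 then (s ⟨i + 1, hi⟩)⁻¹ * s ⟨i, by omega⟩ * s ⟨i + 1, hi⟩
  else s j

/-- One Hurwitz move (a generator or its inverse). -/
def hurwitzRel {G : Type*} [Group G] {n : ℕ} (s t : Fin n → G) : Prop :=
  ∃ (i : ℕ) (hi : i + 1 < n), t = hurwitzSigma i hi s ∨ s = hurwitzSigma i hi t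

/-- The Hurwitz orbit of a tuple: everything reachable by braid group elements. -/
def hurwitzOrbit {G : Type*} [Group G] {n : ℕ} (s : Fin n → G) : Set (Fin n → G) :=
  {t | Relation.ReflTransGen hurwitzRel s t}

section

variable {G : Type*} [Group G] {n m : ℕ}

theorem mem_hurwitzOrbit_self (s : Fin n → G) : s ∈ hurwitzOrbit s :=
  Relation.ReflTransGen.refl

theorem hurwitzOrbit_subset {s t : Fin n → G} (h : t ∈ hurwitzOrbit s) :
    hurwitzOrbit t ⊆ hurwitzOrbit s :=
  fun _ hu => Relation.ReflTransGen.trans h hu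

theorem hurwitzSigma_mem_hurwitzOrbit (i : ℕ) (hi : i + 1 < n) (t : Fin n → G) :
    hurwitzSigma i hi t ∈ hurwitzOrbit t :=
  Relation.ReflTransGen.single ⟨i, hi, Or.inl rfl⟩

theorem take_ofFn_hurwitzSigma (i : ℕ) (hi : i + 1 < n) (t : Fin n → G) :
    (List.ofFn (hurwitzSigma i hi t)).take i = (List.ofFn t).take i := by
  refine List.ext_getElem (by simp) fun j hj _ => ?_
  simp only [List.length_take, List.length_ofFn] at hj
  simp [hurwitzSigma, show j ≠ i by omega, show j ≠ i + 1 by omega]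

theorem drop_ofFn_hurwitzSigma (i : ℕ) (hi : i + 1 < n) (t : Fin n → G) :
    (List.ofFn (hurwitzSigma i hi t)).drop (i + 2) = (List.ofFn t).drop (i + 2) := by
  refine List.ext_getElem (by simp) fun j _ _ => ?_
  simp [hurwitzSigma, show i + 2 + j ≠ i by omega, show i + 2 + j ≠ i + 1 by omega]

theorem prod_ofFn_eq_take_mul_mul_mul_drop (t : Fin n → G) (i : ℕ) (hi : i + 1 < n) :
    (List.ofFn t).prod = ((List.ofFn t).take i).prod *
      (t ⟨i, by omega⟩ * (t ⟨i + 1, hi⟩ * ((List.ofFn t).drop (i + 2)).prod)) := by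
  rw [← List.prod_take_mul_prod_drop _ i, List.drop_eq_getElem_cons (by simp; omega),
    List.drop_eq_getElem_cons (by simp; omega)]
  simp

theorem prod_ofFn_hurwitzSigma (i : ℕ) (hi : i + 1 < n) (t : Fin n → G) :
    (List.ofFn (hurwitzSigma i hi t)).prod = (List.ofFn t).prod := by
  rw [prod_ofFn_eq_take_mul_mul_mul_drop _ i hi, prod_ofFn_eq_take_mul_mul_mul_drop t i hi,
    take_ofFn_hurwitzSigma, drop_ofFn_hurwitzSigma]
  simp only [hurwitzSigma, if_pos, if_neg (show i + 1 ≠ i by omega)]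
  group

theorem prod_ofFn_eq_of_mem_hurwitzOrbit {s t : Fin n → G} (h : t ∈ hurwitzOrbit s) :
    (List.ofFn t).prod = (List.ofFn s).prod := by
  induction h with
  | refl => rfl
  | tail _ hrel ih =>
    obtain ⟨i, hi, rfl | rfl⟩ := hrel
    · rw [prod_ofFn_hurwitzSigma, ih]
    · rw [← ih, prod_ofFn_hurwitzSigma]

/-- The result of `σ_p, σ_{p+1}, …, σ_{m-1}`: entry `p` moves to the end, conjugated by the
product of the entries it passes. -/
def hurwitzSweep (p : Fin (m + 1)) (t : Fin (m + 1) → G) : Fin (m + 1) → G :=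
  Fin.snoc (t ∘ p.succAbove)
    (((List.ofFn t).drop (p + 1)).prod⁻¹ * t p * ((List.ofFn t).drop (p + 1)).prod)

theorem hurwitzSweep_last (t : Fin (m + 1) → G) : hurwitzSweep (Fin.last m) t = t := by
  rw [hurwitzSweep, List.drop_eq_nil_of_le (by simp), Fin.succAbove_last]
  rw [List.prod_nil, inv_one, one_mul, mul_one]
  exact Fin.snoc_init_self t

theorem hurwitzSweep_castSucc (i : Fin m) (t : Fin (m + 1) → G) :
    hurwitzSweep i.castSucc t = hurwitzSweep i.succ (hurwitzSigma i (by omega) t) := by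
  rw [hurwitzSweep, hurwitzSweep]
  congr 1
  · funext j
    simp only [Function.comp_apply, Fin.succAbove, Fin.lt_def, hurwitzSigma, Fin.val_castSucc,
      Fin.val_succ]
    split_ifs <;> simp only [Fin.val_castSucc, Fin.val_succ] at * <;>
      first | omega | rfl | (congr 1; ext; simp only [Fin.val_succ]; omega)
  · have hc : ((List.ofFn t).drop (i + 1)).prod =
        t i.succ * ((List.ofFn t).drop (i + 2)).prod := by
      rw [List.drop_eq_getElem_cons (by simp)]
      simp
    rw [Fin.val_succ, Fin.val_castSucc, drop_ofFn_hurwitzSigma, hc]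
    simp only [hurwitzSigma, Fin.val_succ, if_neg (show i.val + 1 ≠ i by omega), if_pos]
    change _ = _ * ((t i.succ)⁻¹ * t i.castSucc * t i.succ) * _
    group

theorem hurwitzSweep_mem_hurwitzOrbit (p : Fin (m + 1)) (t : Fin (m + 1) → G) :
    hurwitzSweep p t ∈ hurwitzOrbit t := by
  induction p using Fin.reverseInduction generalizing t with
  | last => rw [hurwitzSweep_last]; exact mem_hurwitzOrbit_self t
  | cast i ih =>
    rw [hurwitzSweep_castSucc]
    exact hurwitzOrbit_subset (hurwitzSigma_mem_hurwitzOrbit _ _ t) (ih _)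

theorem hurwitzSweep_zero (t : Fin (m + 1) → G) :
    hurwitzSweep 0 t =
      Fin.snoc (Fin.tail t) ((List.ofFn t).prod⁻¹ * t 0 * (List.ofFn t).prod) := by
  rw [hurwitzSweep, List.ofFn_succ]
  simp only [Fin.val_zero, zero_add, List.drop_succ_cons, List.drop_zero, List.prod_cons,
    Fin.succAbove_zero]
  congr 1
  group

theorem rotate_conj_prod_mem_hurwitzOrbit (t : Fin (m + 1) → G) {j : ℕ} (hj : j ≤ m + 1) :
    (fun i : Fin (m + 1) => if h : i + j < m + 1 then t ⟨i + j, h⟩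
      else (List.ofFn t).prod⁻¹ * t ⟨i + j - (m + 1), by omega⟩ * (List.ofFn t).prod) ∈
      hurwitzOrbit t := by
  induction j with
  | zero =>
    convert mem_hurwitzOrbit_self t using 1
    funext i
    simp only [add_zero, dif_pos i.isLt]
  | succ j ih =>
    have hmem := ih (by omega)
    refine hurwitzOrbit_subset hmem ?_
    convert hurwitzSweep_mem_hurwitzOrbit 0 _ using 1
    rw [hurwitzSweep_zero, prod_ofFn_eq_of_mem_hurwitzOrbit hmem]
    funext i
    cases i using Fin.lastCases with
    | last =>
      simp only [Fin.snoc_last, Fin.val_last, Fin.val_zero, zero_add]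
      rw [dif_neg (by omega), dif_pos (by omega)]
      simp only [show m + (j + 1) - (m + 1) = j by omega]
    | cast i =>
      simp only [Fin.snoc_castSucc, Fin.tail, Fin.val_succ, Fin.val_castSucc,
        show i.val + 1 + j = i.val + (j + 1) by omega]

theorem conj_prod_mem_hurwitzOrbit (t : Fin n → G) :
    (fun i => (List.ofFn t).prod⁻¹ * t i * (List.ofFn t).prod) ∈ hurwitzOrbit t := by
  cases n with
  | zero => convert mem_hurwitzOrbit_self t
  | succ m =>
    convert rotate_conj_prod_mem_hurwitzOrbit t le_rfl using 1
    funext i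
    simp only [dif_neg (show ¬i.val + (m + 1) < m + 1 by omega), Nat.add_sub_cancel]

theorem conj_prod_pow_mem_hurwitzOrbit (t : Fin n → G) (a : ℕ) :
    (fun i => ((List.ofFn t).prod ^ a)⁻¹ * t i * (List.ofFn t).prod ^ a) ∈ hurwitzOrbit t := by
  induction a with
  | zero => simpa using mem_hurwitzOrbit_self t
  | succ a ih =>
    refine hurwitzOrbit_subset ih ?_
    convert conj_prod_mem_hurwitzOrbit _ using 1
    rw [prod_ofFn_eq_of_mem_hurwitzOrbit ih]
    funext i
    group

theorem exists_pos_pow_commute_of_forall_conj_pow_mem {ι : Type*} {S : Set (ι → G)}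
    (hS : S.Finite) (c : G) (t : ι → G)
    (h : ∀ a : ℕ, (fun i => (c ^ a)⁻¹ * t i * c ^ a) ∈ S) :
    ∃ m, 0 < m ∧ ∀ i, Commute (c ^ m) (t i) := by
  obtain ⟨a, b, hab, heq⟩ := hS.exists_lt_map_eq_of_forall_mem h
  refine ⟨b - a, by omega, fun i => ?_⟩
  have hb : c ^ b = c ^ (b - a) * c ^ a := (pow_sub_mul_pow c hab.le).symm
  have hi : (c ^ a)⁻¹ * t i * c ^ a =
      (c ^ (b - a) * c ^ a)⁻¹ * t i * (c ^ (b - a) * c ^ a) := by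
    rw [← hb]
    exact congrFun heq i
  calc c ^ (b - a) * t i = c ^ (b - a) * (c ^ a * ((c ^ a)⁻¹ * t i * c ^ a) * (c ^ a)⁻¹) := by
        group
    _ = c ^ (b - a) * (c ^ a * ((c ^ (b - a) * c ^ a)⁻¹ * t i * (c ^ (b - a) * c ^ a)) *
        (c ^ a)⁻¹) := by rw [hi]
    _ = t i * c ^ (b - a) := by group

theorem hurwitzSigma_snoc (i : ℕ) (hi : i + 1 < m) (w : Fin m → G) (x : G) :
    hurwitzSigma i (Nat.lt_succ_of_lt hi) (Fin.snoc w x : Fin (m + 1) → G) =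
      Fin.snoc (hurwitzSigma i hi w) x := by
  funext j
  cases j using Fin.lastCases with
  | last =>
    simp only [hurwitzSigma, Fin.snoc_last, Fin.val_last]
    rw [if_neg (by omega), if_neg (by omega)]
  | cast j =>
    have e1 : (⟨i + 1, by omega⟩ : Fin (m + 1)) = Fin.castSucc ⟨i + 1, hi⟩ := rfl
    have e2 : (⟨i, by omega⟩ : Fin (m + 1)) = Fin.castSucc ⟨i, by omega⟩ := rfl
    simp only [hurwitzSigma, Fin.snoc_castSucc, Fin.val_castSucc, e1, e2]

theorem snoc_mem_hurwitzOrbit_snoc {v w : Fin m → G} (x : G) (h : w ∈ hurwitzOrbit v) :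
    (Fin.snoc w x : Fin (m + 1) → G) ∈ hurwitzOrbit (Fin.snoc v x) := by
  refine Relation.ReflTransGen.lift (fun u => (Fin.snoc u x : Fin (m + 1) → G))
    (fun a b ⟨i, hi, hab⟩ => ⟨i, Nat.lt_succ_of_lt hi, ?_⟩) v w h
  simp only [hurwitzSigma_snoc i hi]
  rcases hab with rfl | rfl
  · exact Or.inl rfl
  · exact Or.inr rfl

theorem finite_hurwitzOrbit_comp_succAbove {s : Fin (m + 1) → G}
    (hfin : (hurwitzOrbit s).Finite) (p : Fin (m + 1)) :
    (hurwitzOrbit (s ∘ p.succAbove)).Finite :=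
  (hfin.preimage (Fin.snoc_left_injective _).injOn).subset fun _ hw =>
    hurwitzOrbit_subset (hurwitzSweep_mem_hurwitzOrbit p s) (snoc_mem_hurwitzOrbit_snoc _ hw)

theorem finite_hurwitzOrbit_comp_of_strictMono {s : Fin n → G}
    (hfin : (hurwitzOrbit s).Finite) {k : ℕ} {ι : Fin k → Fin n} (hι : StrictMono ι) :
    (hurwitzOrbit (s ∘ ι)).Finite := by
  induction n generalizing k with
  | zero =>
    have := ι.isEmpty
    exact Set.toFinite _
  | succ m ih =>
    by_cases hsurj : Function.Surjective ι
    · obtain rfl : k = m + 1 := by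
        simpa using Fintype.card_congr (Equiv.ofBijective ι ⟨hι.injective, hsurj⟩)
      rwa [hι.eq_id, Function.comp_id]
    · obtain ⟨p, hp⟩ := not_forall.mp hsurj
      choose ι' hι' using fun j => Fin.exists_succAbove_eq fun h => hp ⟨j, h⟩
      have hcomp : s ∘ ι = (s ∘ p.succAbove) ∘ ι' := by
        funext j
        simp [hι']
      rw [hcomp]
      refine ih (finite_hurwitzOrbit_comp_succAbove hfin p) fun a b hab => ?_
      rw [← (Fin.strictMono_succAbove p).lt_iff_lt, hι', hι']
      exact hι hab

end

/-- If the Hurwitz orbit of `(s_1,…,s_n)` is finite then for every subsequence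
`(i_1,…,i_k)` some positive power of `s_{i_1} ⋯ s_{i_k}` commutes with each of
`s_{i_1},…,s_{i_k}`. -/
theorem hurwitz_finite_orbit_subseq_central_power {G : Type*} [Group G] {n : ℕ}
    (s : Fin n → G) (hfin : (hurwitzOrbit s).Finite)
    {k : ℕ} (ι : Fin k → Fin n) (hι : StrictMono ι) :
    ∃ m : ℕ, 0 < m ∧ ∀ j : Fin k,
      Commute ((List.ofFn fun j => s (ι j)).prod ^ m) (s (ι j)) :=
  exists_pos_pow_commute_of_forall_conj_pow_mem (finite_hurwitzOrbit_comp_of_strictMono hfin hι)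
    _ _ (conj_prod_pow_mem_hurwitzOrbit (s ∘ ι))
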